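/- arXiv:2507.05398 — 3 statements merged into one kernel-verified Lean document; each statement's English description precedes it below -/
import Mathlib

section
/- Let H be a complex Hilbert space with positive bounded operator A. For all a, b, e ∈ H with ‖e‖_A = 1, one has |⟨a,e⟩_A| + |⟨e,b⟩_A| ≤ √( (‖a‖_A + ‖b‖_A) · max{‖a‖_A, ‖b‖_A} + 2|⟨a,b⟩_A| ). -/
open scoped InnerProductSpace

variable {H : Type*} [NormedAddCommGroup H] [InnerProductSpace ℂ H] [CompleteSpace H]

/-- The `A`-semi-inner product `⟪x, y⟫_A = ⟪A x, y⟫`. -/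
noncomputable def ipA (A : H →L[ℂ] H) (x y : H) : ℂ := ⟪A x, y⟫_ℂ

/-- The `A`-semi-norm `‖x‖_A = √(re ⟪A x, x⟫)`. -/
noncomputable def nA (A : H →L[ℂ] H) (x : H) : ℝ := Real.sqrt (ipA A x x).re

/-!
A positive operator on a Hilbert space factors as `A = T† T`, so `⟪x, y⟫_A = ⟪T x, T y⟫` and
`‖x‖_A = ‖T x‖`: the statement is the corresponding one for the ordinary inner product, applied to
`T a`, `T b` and the unit vector `T e`. There, squaring the left-hand side, the square terms are
bounded by the Boas–Bellman inequality and the cross term by Buzano's inequality, and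
`(‖x‖ + ‖y‖) max ‖x‖ ‖y‖ = (max ‖x‖ ‖y‖)² + ‖x‖ ‖y‖`.
-/

section InnerProductSpace

variable {𝕜 E : Type*} [RCLike 𝕜] [NormedAddCommGroup E] [InnerProductSpace 𝕜 E]

/-- Buzano's inequality. The reflection `r` of `y` in the line `𝕜 ∙ e` has `‖r‖ = ‖y‖` and
`⟪x, r⟫ = 2 ⟪e, y⟫ ⟪x, e⟫ - ⟪x, y⟫`. -/
theorem norm_inner_mul_inner_le_of_norm_eq_one {e : E} (he : ‖e‖ = 1) (x y : E) :
    2 * (‖⟪x, e⟫_𝕜‖ * ‖⟪e, y⟫_𝕜‖) ≤ ‖x‖ * ‖y‖ + ‖⟪x, y⟫_𝕜‖ := by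
  set r := (𝕜 ∙ e).reflection y with hr
  have hr_norm : ‖r‖ = ‖y‖ := LinearIsometryEquiv.norm_map _ y
  have hr_inner : ⟪x, r⟫_𝕜 = 2 * ⟪e, y⟫_𝕜 * ⟪x, e⟫_𝕜 - ⟪x, y⟫_𝕜 := by
    rw [hr, Submodule.reflection_apply, Submodule.starProjection_unit_singleton 𝕜 he,
      inner_sub_right, ← Nat.cast_smul_eq_nsmul 𝕜, smul_smul, inner_smul_right]
    push_cast; ring
  calc 2 * (‖⟪x, e⟫_𝕜‖ * ‖⟪e, y⟫_𝕜‖) = ‖⟪x, r⟫_𝕜 + ⟪x, y⟫_𝕜‖ := by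
        rw [hr_inner, sub_add_cancel, norm_mul, norm_mul, RCLike.norm_two]; ring
    _ ≤ ‖⟪x, r⟫_𝕜‖ + ‖⟪x, y⟫_𝕜‖ := norm_add_le _ _
    _ ≤ ‖x‖ * ‖y‖ + ‖⟪x, y⟫_𝕜‖ := by
        gcongr; exact hr_norm ▸ norm_inner_le_norm x r

/-- The Boas–Bellman inequality for two vectors. With `α = ⟪x, e⟫`, `β = ⟪y, e⟫` and
`S = |α|² + |β|²`, the vector `u = α x + β y` satisfies `⟪u, e⟫ = S`, so `S ≤ ‖u‖`, while
expanding `‖u‖²` gives `‖u‖² ≤ S (max ‖x‖ ‖y‖² + |⟪x, y⟫|)`. -/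
theorem norm_inner_sq_add_norm_inner_sq_le {e : E} (he : ‖e‖ = 1) (x y : E) :
    ‖⟪x, e⟫_𝕜‖ ^ 2 + ‖⟪y, e⟫_𝕜‖ ^ 2 ≤ max ‖x‖ ‖y‖ ^ 2 + ‖⟪x, y⟫_𝕜‖ := by
  set α := ⟪x, e⟫_𝕜
  set β := ⟪y, e⟫_𝕜
  set S := ‖α‖ ^ 2 + ‖β‖ ^ 2
  set u := α • x + β • y
  have hS : 0 ≤ S := by positivity
  have hS_le : S ≤ ‖u‖ := by
    have hu_inner : ⟪u, e⟫_𝕜 = (S : 𝕜) := by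
      have : ⟪u, e⟫_𝕜 = starRingEnd 𝕜 α * α + starRingEnd 𝕜 β * β := by
        simp only [u, inner_add_left, inner_smul_left]; rfl
      rw [this, RCLike.conj_mul, RCLike.conj_mul]; push_cast [S]; rfl
    calc S = ‖⟪u, e⟫_𝕜‖ := by rw [hu_inner, RCLike.norm_ofReal, abs_of_nonneg hS]
      _ ≤ ‖u‖ := by simpa [he] using norm_inner_le_norm (𝕜 := 𝕜) u e
  have hu_sq : ‖u‖ ^ 2 ≤ S * (max ‖x‖ ‖y‖ ^ 2 + ‖⟪x, y⟫_𝕜‖) := by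
    have hcross : RCLike.re ⟪α • x, β • y⟫_𝕜 ≤ ‖α‖ * ‖β‖ * ‖⟪x, y⟫_𝕜‖ := by
      refine (RCLike.re_le_norm _).trans_eq ?_
      simp only [inner_smul_left, inner_smul_right, norm_mul, RCLike.norm_conj]; ring
    have hx : ‖x‖ ^ 2 ≤ max ‖x‖ ‖y‖ ^ 2 := by gcongr; exact le_max_left _ _
    have hy : ‖y‖ ^ 2 ≤ max ‖x‖ ‖y‖ ^ 2 := by gcongr; exact le_max_right _ _
    rw [@norm_add_sq 𝕜, norm_smul, norm_smul]
    nlinarith [two_mul_le_add_sq ‖α‖ ‖β‖, norm_nonneg ⟪x, y⟫_𝕜, sq_nonneg ‖α‖, sq_nonneg ‖β‖]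
  rcases hS.eq_or_lt with hS_zero | hS_pos
  · rw [← hS_zero]; positivity
  · refine le_of_mul_le_mul_left ?_ hS_pos
    nlinarith [pow_le_pow_left₀ hS hS_le 2]

theorem norm_inner_add_norm_inner_le_sqrt {e : E} (he : ‖e‖ = 1) (x y : E) :
    ‖⟪x, e⟫_𝕜‖ + ‖⟪e, y⟫_𝕜‖ ≤
      √((‖x‖ + ‖y‖) * max ‖x‖ ‖y‖ + 2 * ‖⟪x, y⟫_𝕜‖) := by
  have hsquares := norm_inner_sq_add_norm_inner_sq_le (𝕜 := 𝕜) he x y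
  have hcross := norm_inner_mul_inner_le_of_norm_eq_one (𝕜 := 𝕜) he x y
  have hmax : (‖x‖ + ‖y‖) * max ‖x‖ ‖y‖ = max ‖x‖ ‖y‖ ^ 2 + ‖x‖ * ‖y‖ := by
    linear_combination (-max ‖x‖ ‖y‖) * max_add_min ‖x‖ ‖y‖ + max_mul_min ‖x‖ ‖y‖
  rw [norm_inner_symm y e] at hsquares
  apply Real.le_sqrt_of_sq_le
  nlinarith

end InnerProductSpace

theorem ipA_star_mul_self (T : H →L[ℂ] H) (x y : H) :
    ipA (star T * T) x y = ⟪T x, T y⟫_ℂ := by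
  rw [ipA, mul_apply_eq_comp, ContinuousLinearMap.star_eq_adjoint,
    ContinuousLinearMap.adjoint_inner_left]

theorem nA_star_mul_self (T : H →L[ℂ] H) (x : H) : nA (star T * T) x = ‖T x‖ := by
  rw [nA, ipA_star_mul_self, ← RCLike.re_to_complex, inner_self_eq_norm_sq,
    Real.sqrt_sq (norm_nonneg _)]

theorem stmt7 (A : H →L[ℂ] H) (hA : A.IsPositive) (a b e : H) (he : nA A e = 1) :
    ‖ipA A a e‖ + ‖ipA A e b‖ ≤
      Real.sqrt ((nA A a + nA A b) * max (nA A a) (nA A b) +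
        2 * ‖ipA A a b‖) := by
  obtain ⟨T, rfl⟩ := CStarAlgebra.nonneg_iff_eq_star_mul_self.mp
    ((ContinuousLinearMap.nonneg_iff_isPositive A).mpr hA)
  simp only [ipA_star_mul_self, nA_star_mul_self] at he ⊢
  exact norm_inner_add_norm_inner_le_sqrt he (T a) (T b)
end

section
/- Let H be a complex Hilbert space, A a positive bounded operator, and T a bounded operator admitting an A-adjoint T^♯. For all α ∈ [0,1] and β ≥ 0 (and exponent r = 1), one has w_A(T)⁴ ≤ ((1+α+2β)/(8(1+β))) ‖T^♯T + TT^♯‖_A² + ((1−α)/(2(1+β))) w_A(T²)². -/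
/-!
Write `A = R† R`, so that `⟪x, y⟫_A = ⟪R x, R y⟫`. For `‖R x‖ = 1` put `e = R x`, `u = R (T x)`,
`v = R (T♯ x)`: then `⟪u, e⟫ = ⟪e, v⟫ = ⟪T x, x⟫_A` and `⟪u, v⟫ = ⟪T² x, x⟫_A`, so Buzano's
inequality gives `2 |⟪T x, x⟫_A|² ≤ ‖u‖ ‖v‖ + |⟪T² x, x⟫_A|`. By AM–GM,
`2 ‖u‖ ‖v‖ ≤ ‖u‖² + ‖v‖² = ⟪(T♯T + TT♯) x, x⟫_A ≤ ‖T♯T + TT♯‖_A`, and since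
`|⟪T² x, x⟫_A| ≤ ‖u‖ ‖v‖` the weights `α, β` can shift mass from `‖u‖ ‖v‖` to `|⟪T² x, x⟫_A|`.

The suprema involved are finite: an `A`-selfadjoint `U` satisfies `‖U x‖_A ≤ ‖U‖ ‖x‖_A`, by
iterating `‖U x‖_A² ≤ ‖x‖_A ‖U² x‖_A` along the powers `U ^ 2 ^ n`.
-/

open scoped InnerProductSpace

variable {H : Type*} [NormedAddCommGroup H] [InnerProductSpace ℂ H] [CompleteSpace H]

/-- The `A`-numerical radius. -/
noncomputable def wA (A T : H →L[ℂ] H) : ℝ :=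
  sSup {c : ℝ | ∃ x : H, nA A x = 1 ∧ c = ‖ipA A (T x) x‖}

/-- The `A`-operator seminorm. -/
noncomputable def opA (A T : H →L[ℂ] H) : ℝ :=
  sSup {c : ℝ | ∃ x : H, nA A x = 1 ∧ c = nA A (T x)}

theorem le_of_forall_pow_two_pow_le {a b C : ℝ} (ha : 0 ≤ a)
    (h : ∀ n : ℕ, b ^ 2 ^ n ≤ C * a ^ 2 ^ n) : b ≤ a := by
  by_contra! hab
  rcases ha.eq_or_lt with rfl | ha
  · exact (h 0).not_gt (by simpa using hab)
  · have hr : 1 < b / a := (one_lt_div ha).2 hab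
    obtain ⟨n, hn⟩ := pow_unbounded_of_one_lt C hr
    have hC : (b / a) ^ 2 ^ n ≤ C := by
      rw [div_pow, div_le_iff₀ (by positivity)]; exact h n
    exact (hn.trans_le (pow_le_pow_right₀ hr.le Nat.lt_two_pow_self.le)).not_ge hC

theorem sSup_pow_le {S : Set ℝ} {K : ℝ} {n : ℕ} (hn : n ≠ 0) (hK : 0 ≤ K)
    (hS : ∀ c ∈ S, 0 ≤ c ∧ c ^ n ≤ K) : sSup S ^ n ≤ K := by
  have hle : sSup S ≤ K ^ (n⁻¹ : ℝ) := Real.sSup_le (fun c hc =>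
    (Real.le_rpow_inv_iff_of_pos (hS c hc).1 hK (by positivity)).2
      (by exact_mod_cast (hS c hc).2)) (by positivity)
  calc sSup S ^ n ≤ (K ^ (n⁻¹ : ℝ)) ^ n :=
        pow_le_pow_left₀ (Real.sSup_nonneg fun c hc => (hS c hc).1) hle n
    _ = K := Real.rpow_inv_natCast_pow hK hn

theorem pow_four_le_of_two_mul_sq_le_add {w p q N M α β : ℝ} (hα : α ∈ Set.Icc (0 : ℝ) 1)
    (hβ : 0 ≤ β) (hq : 0 ≤ q) (hqp : q ≤ p) (hpN : 2 * p ≤ N) (hqM : q ≤ M)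
    (hw : 2 * w ^ 2 ≤ p + q) :
    w ^ 4 ≤ (1 + α + 2 * β) / (8 * (1 + β)) * N ^ 2 + (1 - α) / (2 * (1 + β)) * M ^ 2 := by
  obtain ⟨hα0, hα1⟩ := hα
  -- the difference of the two sides is `(p - q) (p - q + 2 α (p + q) + β (3 p + q))`
  have hweights : (1 + β) * (p + q) ^ 2 ≤ 2 * (1 + α + 2 * β) * p ^ 2 + 2 * (1 - α) * q ^ 2 := by
    have : 0 ≤ (p - q) * (p - q + 2 * α * (p + q) + β * (3 * p + q)) := by
      apply mul_nonneg <;> nlinarith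
    nlinarith
  have hw4 : 4 * w ^ 4 ≤ (p + q) ^ 2 := by nlinarith
  have hN : 4 * p ^ 2 ≤ N ^ 2 := by nlinarith
  have hM : q ^ 2 ≤ M ^ 2 := by nlinarith
  have hβ1 : 0 < 1 + β := by linarith
  field_simp
  nlinarith [mul_le_mul_of_nonneg_left hN (by linarith : 0 ≤ 1 + α + 2 * β),
    mul_le_mul_of_nonneg_left hM (by linarith : 0 ≤ 1 - α)]

section InnerProductSpace

variable {𝕜 E F : Type*} [RCLike 𝕜] [NormedAddCommGroup E] [InnerProductSpace 𝕜 E]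
  [NormedAddCommGroup F] [InnerProductSpace 𝕜 F]

/-- Buzano's inequality. -/
theorem two_mul_norm_inner_mul_inner_le {e : E} (he : ‖e‖ = 1) (u v : E) :
    2 * ‖⟪u, e⟫_𝕜 * ⟪e, v⟫_𝕜‖ ≤ ‖u‖ * ‖v‖ + ‖⟪u, v⟫_𝕜‖ := by
  set w := (𝕜 ∙ e).reflection v
  have hw : ⟪u, w⟫_𝕜 + ⟪u, v⟫_𝕜 = 2 * (⟪u, e⟫_𝕜 * ⟪e, v⟫_𝕜) := by
    simp only [w, Submodule.reflection_apply, Submodule.starProjection_unit_singleton 𝕜 he,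
      inner_sub_right, inner_smul_right, two_smul, inner_add_right]
    ring
  calc 2 * ‖⟪u, e⟫_𝕜 * ⟪e, v⟫_𝕜‖ = ‖⟪u, w⟫_𝕜 + ⟪u, v⟫_𝕜‖ := by
        rw [hw, norm_mul (2 : 𝕜), RCLike.norm_two]
    _ ≤ ‖u‖ * ‖w‖ + ‖⟪u, v⟫_𝕜‖ :=
        (norm_add_le _ _).trans (by gcongr; exact norm_inner_le_norm _ _)
    _ = ‖u‖ * ‖v‖ + ‖⟪u, v⟫_𝕜‖ := by rw [LinearIsometryEquiv.norm_map]

def IsAdjointWrt (R : E →L[𝕜] F) (S T : E →L[𝕜] E) : Prop :=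
  ∀ x y, ⟪R (S x), R y⟫_𝕜 = ⟪R x, R (T y)⟫_𝕜

def IsSymmetricWrt (R : E →L[𝕜] F) (U : E →L[𝕜] E) : Prop :=
  IsAdjointWrt R U U

namespace IsSymmetricWrt

variable {R : E →L[𝕜] F} {U V : E →L[𝕜] E}

theorem add (hU : IsSymmetricWrt R U) (hV : IsSymmetricWrt R V) :
    IsSymmetricWrt R (U + V) := fun x y => by
  simp only [add_apply, map_add, inner_add_left, inner_add_right, hU x y, hV x y]

theorem pow (hU : IsSymmetricWrt R U) (n : ℕ) : IsSymmetricWrt R (U ^ n) := by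
  induction n with
  | zero => intro x y; simp
  | succ n ih =>
    intro x y
    calc ⟪R ((U ^ (n + 1)) x), R y⟫_𝕜 = ⟪R x, R (U ((U ^ n) y))⟫_𝕜 := by
          rw [pow_succ, mul_apply_eq_comp, ih, hU]
      _ = ⟪R x, R ((U ^ (n + 1)) y)⟫_𝕜 := by rw [← mul_apply_eq_comp, ← pow_succ']

theorem norm_sq_le (hU : IsSymmetricWrt R U) (x : E) :
    ‖R (U x)‖ ^ 2 ≤ ‖R x‖ * ‖R (U (U x))‖ := by
  rw [← inner_self_eq_norm_sq (𝕜 := 𝕜), hU]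
  exact re_inner_le_norm _ _

theorem norm_pow_two_pow_le (hU : IsSymmetricWrt R U) (x : E) (n : ℕ) :
    ‖R (U x)‖ ^ 2 ^ n ≤ ‖R x‖ ^ (2 ^ n - 1) * ‖R ((U ^ 2 ^ n) x)‖ := by
  induction n with
  | zero => simp
  | succ n ih =>
    have hstep := (hU.pow (2 ^ n)).norm_sq_le x
    rw [← mul_apply_eq_comp, ← pow_add, ← two_mul, ← pow_succ'] at hstep
    have hexp : 2 ^ (n + 1) - 1 = 2 * (2 ^ n - 1) + 1 := by
      have := Nat.one_le_two_pow (n := n); rw [pow_succ]; omega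
    calc ‖R (U x)‖ ^ 2 ^ (n + 1) = (‖R (U x)‖ ^ 2 ^ n) ^ 2 := by rw [pow_succ, pow_mul]
      _ ≤ (‖R x‖ ^ (2 ^ n - 1) * ‖R ((U ^ 2 ^ n) x)‖) ^ 2 := by gcongr
      _ = (‖R x‖ ^ (2 ^ n - 1)) ^ 2 * ‖R ((U ^ 2 ^ n) x)‖ ^ 2 := mul_pow _ _ _
      _ ≤ (‖R x‖ ^ (2 ^ n - 1)) ^ 2 * (‖R x‖ * ‖R ((U ^ 2 ^ (n + 1)) x)‖) := by gcongr
      _ = ‖R x‖ ^ (2 ^ (n + 1) - 1) * ‖R ((U ^ 2 ^ (n + 1)) x)‖ := by rw [hexp]; ring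

theorem norm_apply_le (hU : IsSymmetricWrt R U) (x : E) : ‖R (U x)‖ ≤ ‖U‖ * ‖R x‖ := by
  rcases (norm_nonneg (R x)).eq_or_lt with hx | hx
  · have := hU.norm_sq_le x
    rw [← hx, zero_mul] at this
    rw [← hx, mul_zero]
    exact (pow_eq_zero_iff two_ne_zero).1 (le_antisymm this (by positivity)) |>.le
  · have hpow (n : ℕ) : ‖R ((U ^ 2 ^ n) x)‖ ≤ ‖R‖ * (‖U‖ ^ 2 ^ n * ‖x‖) :=
      calc ‖R ((U ^ 2 ^ n) x)‖ ≤ ‖R‖ * (‖U ^ 2 ^ n‖ * ‖x‖) :=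
            R.le_of_opNorm_le_of_le le_rfl ((U ^ 2 ^ n).le_opNorm x)
        _ ≤ ‖R‖ * (‖U‖ ^ 2 ^ n * ‖x‖) := by grw [norm_pow_le' U (Nat.two_pow_pos n)]
    refine le_of_forall_pow_two_pow_le (C := ‖R‖ * ‖x‖ / ‖R x‖) (by positivity) fun n => ?_
    obtain ⟨m, hm⟩ : ∃ m, 2 ^ n = m + 1 :=
      ⟨_, (Nat.succ_pred_eq_of_pos (Nat.two_pow_pos n)).symm⟩
    calc ‖R (U x)‖ ^ 2 ^ n ≤ ‖R x‖ ^ (2 ^ n - 1) * (‖R‖ * (‖U‖ ^ 2 ^ n * ‖x‖)) := by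
          grw [hU.norm_pow_two_pow_le x n, hpow]
      _ = ‖R‖ * ‖x‖ / ‖R x‖ * (‖U‖ * ‖R x‖) ^ 2 ^ n := by
          rw [hm, Nat.add_sub_cancel]
          field_simp
          ring

end IsSymmetricWrt

namespace IsAdjointWrt

variable {R : E →L[𝕜] F} {T Ts : E →L[𝕜] E}

theorem symm (h : IsAdjointWrt R T Ts) : IsAdjointWrt R Ts T := fun x y => by
  rw [← inner_conj_symm, ← h, inner_conj_symm]

theorem isSymmetricWrt_comp (h : IsAdjointWrt R T Ts) : IsSymmetricWrt R (Ts ∘L T) :=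
  fun x y => by simp only [ContinuousLinearMap.comp_apply, h.symm (T x), h x]

theorem norm_sq_apply_eq (h : IsAdjointWrt R T Ts) (x : E) :
    ‖R (T x)‖ ^ 2 = RCLike.re ⟪R x, R ((Ts ∘L T) x)⟫_𝕜 := by
  rw [← inner_self_eq_norm_sq (𝕜 := 𝕜), h, ContinuousLinearMap.comp_apply]

theorem norm_apply_le (h : IsAdjointWrt R T Ts) (x : E) :
    ‖R (T x)‖ ≤ √‖Ts ∘L T‖ * ‖R x‖ := by
  rw [← Real.sqrt_sq (norm_nonneg (R x)), ← Real.sqrt_mul (norm_nonneg _)]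
  refine Real.le_sqrt_of_sq_le ?_
  calc ‖R (T x)‖ ^ 2 = RCLike.re ⟪R x, R ((Ts ∘L T) x)⟫_𝕜 := h.norm_sq_apply_eq x
    _ ≤ ‖R x‖ * (‖Ts ∘L T‖ * ‖R x‖) :=
        (re_inner_le_norm _ _).trans (by gcongr; exact h.isSymmetricWrt_comp.norm_apply_le x)
    _ = ‖Ts ∘L T‖ * ‖R x‖ ^ 2 := by ring

theorem norm_sq_add_norm_sq_le (h : IsAdjointWrt R T Ts) (x : E) :
    ‖R (T x)‖ ^ 2 + ‖R (Ts x)‖ ^ 2 ≤ ‖R ((Ts ∘L T + T ∘L Ts) x)‖ * ‖R x‖ := by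
  rw [h.norm_sq_apply_eq, h.symm.norm_sq_apply_eq, ← map_add, ← inner_add_right, ← map_add,
    ← add_apply]
  exact (re_inner_le_norm _ _).trans_eq (mul_comm _ _)

theorem norm_inner_comp_self_le (h : IsAdjointWrt R T Ts) (x : E) :
    ‖⟪R (T (T x)), R x⟫_𝕜‖ ≤ ‖R (T x)‖ * ‖R (Ts x)‖ := by
  rw [h]
  exact norm_inner_le_norm _ _

theorem two_mul_norm_inner_sq_le (h : IsAdjointWrt R T Ts) {x : E} (hx : ‖R x‖ = 1) :
    2 * ‖⟪R (T x), R x⟫_𝕜‖ ^ 2 ≤ ‖R (T x)‖ * ‖R (Ts x)‖ + ‖⟪R (T (T x)), R x⟫_𝕜‖ := by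
  have := two_mul_norm_inner_mul_inner_le (𝕜 := 𝕜) hx (R (T x)) (R (Ts x))
  rwa [← h, ← h, norm_mul, ← sq] at this

end IsAdjointWrt

end InnerProductSpace

section SemiInnerProduct

variable {E F : Type*} [NormedAddCommGroup E] [InnerProductSpace ℂ E]
  [NormedAddCommGroup F] [InnerProductSpace ℂ F] {A : E →L[ℂ] E} {R : E →L[ℂ] F}

theorem exists_ipA_eq_inner [CompleteSpace E] (hA : A.IsPositive) :
    ∃ R : E →L[ℂ] E, ∀ x y, ipA A x y = ⟪R x, R y⟫_ℂ := by
  obtain ⟨R, rfl⟩ := CStarAlgebra.nonneg_iff_eq_star_mul_self.1 ((A.nonneg_iff_isPositive).2 hA)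
  exact ⟨R, fun x y => R.adjoint_inner_left y (R x)⟩

theorem nA_eq_norm (hR : ∀ x y, ipA A x y = ⟪R x, R y⟫_ℂ) (x : E) : nA A x = ‖R x‖ := by
  rw [nA, hR, ← RCLike.re_eq_complex_re, inner_self_eq_norm_sq, Real.sqrt_sq (norm_nonneg _)]

theorem le_opA (hR : ∀ x y, ipA A x y = ⟪R x, R y⟫_ℂ) {S : E →L[ℂ] E} {C : ℝ}
    (hS : ∀ x, ‖R (S x)‖ ≤ C * ‖R x‖) {x : E} (hx : ‖R x‖ = 1) : ‖R (S x)‖ ≤ opA A S := by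
  refine le_csSup ⟨C, ?_⟩ ⟨x, by rw [nA_eq_norm hR, hx], by rw [nA_eq_norm hR]⟩
  rintro _ ⟨y, hy, rfl⟩
  rw [nA_eq_norm hR] at hy ⊢
  simpa [hy] using hS y

theorem le_wA (hR : ∀ x y, ipA A x y = ⟪R x, R y⟫_ℂ) {S : E →L[ℂ] E} {C : ℝ}
    (hS : ∀ x, ‖R (S x)‖ ≤ C * ‖R x‖) {x : E} (hx : ‖R x‖ = 1) :
    ‖⟪R (S x), R x⟫_ℂ‖ ≤ wA A S := by
  refine le_csSup ⟨C, ?_⟩ ⟨x, by rw [nA_eq_norm hR, hx], by rw [hR]⟩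
  rintro _ ⟨y, hy, rfl⟩
  rw [nA_eq_norm hR] at hy
  rw [hR]
  calc ‖⟪R (S y), R y⟫_ℂ‖ ≤ ‖R (S y)‖ * ‖R y‖ := norm_inner_le_norm _ _
    _ ≤ C := by simpa [hy] using hS y

theorem wA_pow_le (hR : ∀ x y, ipA A x y = ⟪R x, R y⟫_ℂ) {T : E →L[ℂ] E} {n : ℕ} (hn : n ≠ 0)
    {K : ℝ} (hK : 0 ≤ K) (h : ∀ x, ‖R x‖ = 1 → ‖⟪R (T x), R x⟫_ℂ‖ ^ n ≤ K) : wA A T ^ n ≤ K := by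
  refine sSup_pow_le hn hK ?_
  rintro _ ⟨x, hx, rfl⟩
  rw [nA_eq_norm hR] at hx
  exact ⟨norm_nonneg _, by simpa only [hR] using h x hx⟩

end SemiInnerProduct

theorem stmt10 (A : H →L[ℂ] H) (hA : A.IsPositive) (T Ts : H →L[ℂ] H)
    (hadj : ∀ x y : H, ipA A (T x) y = ipA A x (Ts y))
    (α β : ℝ) (hα : α ∈ Set.Icc (0 : ℝ) 1) (hβ : 0 ≤ β) :
    wA A T ^ 4 ≤
      ((1 + α + 2 * β) / (8 * (1 + β))) * opA A (Ts ∘L T + T ∘L Ts) ^ 2 +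
        ((1 - α) / (2 * (1 + β))) * wA A (T ∘L T) ^ 2 := by
  obtain ⟨R, hR⟩ := exists_ipA_eq_inner hA
  have hTR : IsAdjointWrt R T Ts := fun x y => by simpa only [hR] using hadj x y
  have hT2 (x : H) : ‖R ((T ∘L T) x)‖ ≤ (√‖Ts ∘L T‖ * √‖Ts ∘L T‖) * ‖R x‖ := by
    grw [ContinuousLinearMap.comp_apply, hTR.norm_apply_le, hTR.norm_apply_le, mul_assoc]
  have hK : 0 ≤ ((1 + α + 2 * β) / (8 * (1 + β))) * opA A (Ts ∘L T + T ∘L Ts) ^ 2 +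
      ((1 - α) / (2 * (1 + β))) * wA A (T ∘L T) ^ 2 := by
    obtain ⟨hα0, hα1⟩ := hα
    exact add_nonneg (mul_nonneg (div_nonneg (by linarith) (by linarith)) (sq_nonneg _))
      (mul_nonneg (div_nonneg (by linarith) (by linarith)) (sq_nonneg _))
  refine wA_pow_le hR four_ne_zero hK fun x hx => ?_
  have hD : IsSymmetricWrt R (Ts ∘L T + T ∘L Ts) :=
    hTR.isSymmetricWrt_comp.add hTR.symm.isSymmetricWrt_comp
  have hN := le_opA hR hD.norm_apply_le hx
  have hsum := hTR.norm_sq_add_norm_sq_le x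
  rw [hx, mul_one] at hsum
  exact pow_four_le_of_two_mul_sq_le_add hα hβ (norm_nonneg _) (hTR.norm_inner_comp_self_le x)
    (by nlinarith [two_mul_le_add_sq ‖R (T x)‖ ‖R (Ts x)‖]) (le_wA hR hT2 hx)
    (hTR.two_mul_norm_inner_sq_le hx)
end

section
/- Let H be a complex Hilbert space, A a positive bounded operator, and T, S bounded operators admitting A-adjoints. Then ‖T + S‖_A² ≤ (1/2)( ‖T^♯T + S^♯S‖_A + ‖T^♯T − S^♯S‖_A ) + ‖T‖_A ‖S‖_A + 2 w_A(S^♯T), where ‖R‖_A = sup{‖Rx‖_A : ‖x‖_A = 1} and w_A(R) = sup{|⟨Rx,x⟩_A| : ‖x‖_A = 1}. -/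
open scoped InnerProductSpace

variable {H : Type*} [NormedAddCommGroup H] [InnerProductSpace ℂ H] [CompleteSpace H]

/-!
Write `A = (A^{1/2})²`, so that `⟪x, y⟫_A = ⟪A^{1/2} x, A^{1/2} y⟫` and Cauchy–Schwarz holds for
the `A`-semi-inner product. For `‖x‖_A = 1` expand
`‖(T + S) x‖_A² = ‖T x‖_A² + ‖S x‖_A² + 2 Re ⟪T x, S x⟫_A`. Here
`‖T x‖_A² ± ‖S x‖_A² = Re ⟪(T^♯T ± S^♯S) x, x⟫_A` is at most `‖T^♯T ± S^♯S‖_A`,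
`⟪T x, S x⟫_A = ⟪S^♯T x, x⟫_A` is at most `w_A(S^♯T)`, and
`a² + b² = max{a², b²} + min{a², b²} ≤ (a² + b² + |a² - b²|) / 2 + a b`.

The suprema defining `‖·‖_A` and `w_A` are finite (otherwise `sSup` would be junk): an
`A`-selfadjoint `C` satisfies `‖C x‖_A ^ 2 ^ n ≤ ‖C ^ 2 ^ n x‖_A ≤ ‖A^{1/2}‖ ‖x‖ ‖C‖ ^ 2 ^ n`,
whence `‖C x‖_A ≤ ‖C‖` when `‖x‖_A = 1`, and `‖T x‖_A² ≤ ‖T^♯T x‖_A` reduces `T` to `C = T^♯T`.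
-/

theorem le_of_pow_two_pow_le_mul_pow {a c K : ℝ} (hc : 0 ≤ c)
    (h : ∀ n : ℕ, a ^ 2 ^ n ≤ K * c ^ 2 ^ n) : a ≤ c := by
  rcases hc.eq_or_lt with rfl | hc
  · simpa using h 0
  by_contra! hca
  have hq : 1 < a / c := (one_lt_div hc).mpr hca
  obtain ⟨n, hn⟩ := pow_unbounded_of_one_lt K hq
  have : (a / c) ^ 2 ^ n ≤ K := by
    rw [div_pow, div_le_iff₀ (pow_pos hc _)]
    exact h n
  linarith [pow_le_pow_right₀ hq.le (Nat.lt_two_pow_self (n := n)).le]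

theorem sq_add_sq_le_half_add_abs_sub_add_mul {a b : ℝ} (ha : 0 ≤ a) (hb : 0 ≤ b) :
    a ^ 2 + b ^ 2 ≤ (a ^ 2 + b ^ 2 + |a ^ 2 - b ^ 2|) / 2 + a * b := by
  rcases le_total a b with hab | hab
  · rw [abs_of_nonpos (by nlinarith)]
    nlinarith
  · rw [abs_of_nonneg (by nlinarith)]
    nlinarith

section ASemiInner

variable {E : Type*} [NormedAddCommGroup E] [InnerProductSpace ℂ E]

theorem nA_nonneg (A : E →L[ℂ] E) (x : E) : 0 ≤ nA A x := Real.sqrt_nonneg _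

theorem opA_nonneg (A T : E →L[ℂ] E) : 0 ≤ opA A T :=
  Real.sSup_nonneg (by rintro c ⟨x, -, rfl⟩; exact nA_nonneg A _)

theorem wA_nonneg (A T : E →L[ℂ] E) : 0 ≤ wA A T :=
  Real.sSup_nonneg (by rintro c ⟨x, -, rfl⟩; exact norm_nonneg _)

variable {A : E →L[ℂ] E}

theorem ipA_eq_inner_sqrt [CompleteSpace E] (hA : A.IsPositive) (x y : E) :
    ipA A x y = ⟪CFC.sqrt A x, CFC.sqrt A y⟫_ℂ := by
  have hA0 : 0 ≤ A := (ContinuousLinearMap.nonneg_iff_isPositive A).mpr hA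
  calc ipA A x y = ⟪(CFC.sqrt A * CFC.sqrt A) x, y⟫_ℂ := by
        rw [CFC.sqrt_mul_sqrt_self A hA0, ipA]
    _ = ⟪CFC.sqrt A x, CFC.sqrt A y⟫_ℂ :=
        (IsSelfAdjoint.of_nonneg (CFC.sqrt_nonneg A)).isSymmetric _ _

theorem nA_eq_norm_sqrt [CompleteSpace E] (hA : A.IsPositive) (x : E) :
    nA A x = ‖CFC.sqrt A x‖ := by
  rw [nA, ipA_eq_inner_sqrt hA, ← RCLike.re_to_complex, inner_self_eq_norm_sq,
    Real.sqrt_sq (norm_nonneg _)]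

theorem nA_sq [CompleteSpace E] (hA : A.IsPositive) (x : E) : nA A x ^ 2 = (ipA A x x).re := by
  rw [nA_eq_norm_sqrt hA, ipA_eq_inner_sqrt hA, ← RCLike.re_to_complex, inner_self_eq_norm_sq]

theorem norm_ipA_le [CompleteSpace E] (hA : A.IsPositive) (x y : E) :
    ‖ipA A x y‖ ≤ nA A x * nA A y := by
  rw [ipA_eq_inner_sqrt hA, nA_eq_norm_sqrt hA, nA_eq_norm_sqrt hA]
  exact norm_inner_le_norm _ _

theorem nA_le [CompleteSpace E] (hA : A.IsPositive) (x : E) : nA A x ≤ ‖CFC.sqrt A‖ * ‖x‖ := by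
  rw [nA_eq_norm_sqrt hA]
  exact (CFC.sqrt A).le_opNorm x

theorem conj_ipA [CompleteSpace E] (hA : A.IsPositive) (x y : E) :
    starRingEnd ℂ (ipA A x y) = ipA A y x := by
  rw [ipA_eq_inner_sqrt hA, ipA_eq_inner_sqrt hA, inner_conj_symm]

theorem nA_add_sq [CompleteSpace E] (hA : A.IsPositive) (x y : E) :
    nA A (x + y) ^ 2 = nA A x ^ 2 + nA A y ^ 2 + 2 * (ipA A x y).re := by
  rw [nA_eq_norm_sqrt hA, nA_eq_norm_sqrt hA, nA_eq_norm_sqrt hA, ipA_eq_inner_sqrt hA, map_add,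
    norm_add_sq (𝕜 := ℂ), RCLike.re_to_complex]
  ring

theorem ipA_add_left (x y z : E) : ipA A (x + y) z = ipA A x z + ipA A y z := by
  simp only [ipA, map_add, inner_add_left]

theorem ipA_sub_left (x y z : E) : ipA A (x - y) z = ipA A x z - ipA A y z := by
  simp only [ipA, map_sub, inner_sub_left]

theorem opA_sq_le {T : E →L[ℂ] E} {c : ℝ} (hc : 0 ≤ c)
    (h : ∀ x, nA A x = 1 → nA A (T x) ^ 2 ≤ c) : opA A T ^ 2 ≤ c := by
  have : opA A T ≤ √c := Real.sSup_le (by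
    rintro _ ⟨x, hx, rfl⟩
    exact Real.le_sqrt_of_sq_le (h x hx)) (Real.sqrt_nonneg c)
  calc opA A T ^ 2 ≤ √c ^ 2 := pow_le_pow_left₀ (opA_nonneg A T) this 2
    _ = c := Real.sq_sqrt hc

def HasAAdjoint (A T Ts : E →L[ℂ] E) : Prop :=
  ∀ x y, ipA A (T x) y = ipA A x (Ts y)

namespace HasAAdjoint

variable {T Ts S Ss : E →L[ℂ] E}

theorem symm [CompleteSpace E] (hA : A.IsPositive) (h : HasAAdjoint A T Ts) :
    HasAAdjoint A Ts T := fun x y => by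
  rw [← conj_ipA hA, ← h, conj_ipA hA]

theorem mul (hT : HasAAdjoint A T Ts) (hS : HasAAdjoint A S Ss) :
    HasAAdjoint A (S * T) (Ts * Ss) := fun x y => by
  rw [mul_apply_eq_comp, mul_apply_eq_comp, hS, hT]

theorem add (hT : HasAAdjoint A T Ts) (hS : HasAAdjoint A S Ss) :
    HasAAdjoint A (T + S) (Ts + Ss) := fun x y => by
  simpa only [ipA, add_apply, map_add, inner_add_left, inner_add_right]
    using congrArg₂ (· + ·) (hT x y) (hS x y)

theorem sub (hT : HasAAdjoint A T Ts) (hS : HasAAdjoint A S Ss) :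
    HasAAdjoint A (T - S) (Ts - Ss) := fun x y => by
  simpa only [ipA, sub_apply, map_sub, inner_sub_left, inner_sub_right]
    using congrArg₂ (· - ·) (hT x y) (hS x y)

theorem pow {C : E →L[ℂ] E} (hC : HasAAdjoint A C C) (n : ℕ) :
    HasAAdjoint A (C ^ n) (C ^ n) := by
  induction n with
  | zero => exact fun x y => rfl
  | succ n ih => simpa only [← pow_succ, ← pow_succ'] using hC.mul ih

theorem adjoint_comp_self [CompleteSpace E] (hA : A.IsPositive) (h : HasAAdjoint A T Ts) :
    HasAAdjoint A (Ts ∘L T) (Ts ∘L T) :=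
  h.mul (h.symm hA)

theorem re_ipA_adjoint_comp_self [CompleteSpace E] (hA : A.IsPositive) (h : HasAAdjoint A T Ts)
    (x : E) : (ipA A ((Ts ∘L T) x) x).re = nA A (T x) ^ 2 := by
  rw [ContinuousLinearMap.comp_apply, h.symm hA, nA_sq hA]

theorem nA_apply_le_opNorm [CompleteSpace E] (hA : A.IsPositive) {C : E →L[ℂ] E}
    (hC : HasAAdjoint A C C) {x : E} (hx : nA A x = 1) : nA A (C x) ≤ ‖C‖ := by
  have hsq : ∀ k : ℕ, nA A ((C ^ k) x) ^ 2 ≤ nA A ((C ^ (2 * k)) x) := fun k =>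
    calc nA A ((C ^ k) x) ^ 2 = (ipA A x ((C ^ k) ((C ^ k) x))).re := by rw [nA_sq hA, hC.pow k]
      _ ≤ ‖ipA A x ((C ^ k) ((C ^ k) x))‖ := Complex.re_le_norm _
      _ ≤ nA A x * nA A ((C ^ k) ((C ^ k) x)) := norm_ipA_le hA _ _
      _ = nA A ((C ^ (2 * k)) x) := by rw [hx, one_mul, two_mul, pow_add, mul_apply_eq_comp]
  have hiter : ∀ n : ℕ, nA A (C x) ^ 2 ^ n ≤ nA A ((C ^ 2 ^ n) x) := by
    intro n
    induction n with
    | zero => simp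
    | succ n ih =>
      calc nA A (C x) ^ 2 ^ (n + 1) = (nA A (C x) ^ 2 ^ n) ^ 2 := by rw [pow_succ, pow_mul]
        _ ≤ nA A ((C ^ 2 ^ n) x) ^ 2 := pow_le_pow_left₀ (pow_nonneg (nA_nonneg A _) _) ih 2
        _ ≤ nA A ((C ^ 2 ^ (n + 1)) x) := by rw [pow_succ' 2 n]; exact hsq _
  refine le_of_pow_two_pow_le_mul_pow (K := ‖CFC.sqrt A‖ * ‖x‖) (norm_nonneg C)
    fun n => (hiter n).trans ?_
  calc nA A ((C ^ 2 ^ n) x) ≤ ‖CFC.sqrt A‖ * ‖(C ^ 2 ^ n) x‖ := nA_le hA _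
    _ ≤ ‖CFC.sqrt A‖ * (‖C‖ ^ 2 ^ n * ‖x‖) := by
      gcongr
      exact ((C ^ 2 ^ n).le_opNorm x).trans
        (mul_le_mul_of_nonneg_right (norm_pow_le' C (Nat.two_pow_pos n)) (norm_nonneg x))
    _ = ‖CFC.sqrt A‖ * ‖x‖ * ‖C‖ ^ 2 ^ n := by ring

theorem bddAbove_nA [CompleteSpace E] (hA : A.IsPositive) (h : HasAAdjoint A T Ts) :
    BddAbove {c | ∃ x, nA A x = 1 ∧ c = nA A (T x)} := by
  refine ⟨√‖Ts ∘L T‖, ?_⟩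
  rintro _ ⟨x, hx, rfl⟩
  refine Real.le_sqrt_of_sq_le ?_
  calc nA A (T x) ^ 2 = (ipA A ((Ts ∘L T) x) x).re := (h.re_ipA_adjoint_comp_self hA x).symm
    _ ≤ ‖ipA A ((Ts ∘L T) x) x‖ := Complex.re_le_norm _
    _ ≤ nA A ((Ts ∘L T) x) * nA A x := norm_ipA_le hA _ _
    _ ≤ ‖Ts ∘L T‖ := by
      rw [hx, mul_one]
      exact (h.adjoint_comp_self hA).nA_apply_le_opNorm hA hx

theorem nA_le_opA [CompleteSpace E] (hA : A.IsPositive) (h : HasAAdjoint A T Ts) {x : E}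
    (hx : nA A x = 1) : nA A (T x) ≤ opA A T :=
  le_csSup (h.bddAbove_nA hA) ⟨x, hx, rfl⟩

theorem norm_ipA_le_opA [CompleteSpace E] (hA : A.IsPositive) (h : HasAAdjoint A T Ts) {x : E}
    (hx : nA A x = 1) : ‖ipA A (T x) x‖ ≤ opA A T :=
  calc ‖ipA A (T x) x‖ ≤ nA A (T x) * nA A x := norm_ipA_le hA _ _
    _ ≤ opA A T := by rw [hx, mul_one]; exact h.nA_le_opA hA hx

theorem norm_ipA_le_wA [CompleteSpace E] (hA : A.IsPositive) (h : HasAAdjoint A T Ts) {x : E}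
    (hx : nA A x = 1) : ‖ipA A (T x) x‖ ≤ wA A T :=
  le_csSup ⟨opA A T, by rintro _ ⟨y, hy, rfl⟩; exact h.norm_ipA_le_opA hA hy⟩ ⟨x, hx, rfl⟩

end HasAAdjoint

theorem nA_add_apply_sq_le [CompleteSpace E] (hA : A.IsPositive) {T Ts S Ss : E →L[ℂ] E}
    (hT : HasAAdjoint A T Ts) (hS : HasAAdjoint A S Ss) {x : E} (hx : nA A x = 1) :
    nA A ((T + S) x) ^ 2 ≤
      (1 / 2) * (opA A (Ts ∘L T + Ss ∘L S) + opA A (Ts ∘L T - Ss ∘L S)) +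
        opA A T * opA A S + 2 * wA A (Ss ∘L T) := by
  have hTT := hT.adjoint_comp_self hA
  have hSS := hS.adjoint_comp_self hA
  have hsum : nA A (T x) ^ 2 + nA A (S x) ^ 2 ≤ opA A (Ts ∘L T + Ss ∘L S) :=
    calc nA A (T x) ^ 2 + nA A (S x) ^ 2 = (ipA A ((Ts ∘L T + Ss ∘L S) x) x).re := by
          rw [add_apply, ipA_add_left, Complex.add_re, hT.re_ipA_adjoint_comp_self hA,
            hS.re_ipA_adjoint_comp_self hA]
      _ ≤ ‖ipA A ((Ts ∘L T + Ss ∘L S) x) x‖ := Complex.re_le_norm _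
      _ ≤ opA A (Ts ∘L T + Ss ∘L S) := (hTT.add hSS).norm_ipA_le_opA hA hx
  have hdiff : |nA A (T x) ^ 2 - nA A (S x) ^ 2| ≤ opA A (Ts ∘L T - Ss ∘L S) :=
    calc |nA A (T x) ^ 2 - nA A (S x) ^ 2| = |(ipA A ((Ts ∘L T - Ss ∘L S) x) x).re| := by
          rw [sub_apply, ipA_sub_left, Complex.sub_re, hT.re_ipA_adjoint_comp_self hA,
            hS.re_ipA_adjoint_comp_self hA]
      _ ≤ ‖ipA A ((Ts ∘L T - Ss ∘L S) x) x‖ := Complex.abs_re_le_norm _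
      _ ≤ opA A (Ts ∘L T - Ss ∘L S) := (hTT.sub hSS).norm_ipA_le_opA hA hx
  have hprod : nA A (T x) * nA A (S x) ≤ opA A T * opA A S :=
    mul_le_mul (hT.nA_le_opA hA hx) (hS.nA_le_opA hA hx) (nA_nonneg A _) (opA_nonneg A _)
  have hcross : (ipA A (T x) (S x)).re ≤ wA A (Ss ∘L T) := by
    rw [← hS.symm hA]
    exact (Complex.re_le_norm _).trans ((hT.mul (hS.symm hA)).norm_ipA_le_wA hA hx)
  rw [add_apply, nA_add_sq hA]
  linarith [sq_add_sq_le_half_add_abs_sub_add_mul (nA_nonneg A (T x)) (nA_nonneg A (S x))]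

end ASemiInner

theorem stmt12 (A : H →L[ℂ] H) (hA : A.IsPositive) (T Ts S Ss : H →L[ℂ] H)
    (hadjT : ∀ x y : H, ipA A (T x) y = ipA A x (Ts y))
    (hadjS : ∀ x y : H, ipA A (S x) y = ipA A x (Ss y)) :
    opA A (T + S) ^ 2 ≤
      (1 / 2) * (opA A (Ts ∘L T + Ss ∘L S) + opA A (Ts ∘L T - Ss ∘L S)) +
        opA A T * opA A S + 2 * wA A (Ss ∘L T) := by
  refine opA_sq_le ?_ fun x hx => nA_add_apply_sq_le hA hadjT hadjS hx
  have := mul_nonneg (opA_nonneg A T) (opA_nonneg A S)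
  linarith [opA_nonneg A (Ts ∘L T + Ss ∘L S), opA_nonneg A (Ts ∘L T - Ss ∘L S),
    wA_nonneg A (Ss ∘L T)]
end
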